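/- arXiv:0809.0155 — 2 statements merged into one kernel-verified Lean document; each statement's English description precedes it below -/
import Mathlib

section
/- For integers k_1,…,k_r with ∑_α k_α = k and 0 ≤ k ≤ r, the quantity ∑_{α<β}(k_α−k_β)² is bounded below by k(r−k), with equality achieved when exactly k of the k_α equal 1 and the rest equal 0. -/
open Finset

lemma pair_sum_double (r : ℕ) (f : Fin r → ℤ) :
    2 * ∑ α, ∑ β ∈ univ.filter (fun β => α < β), (f α - f β) ^ 2
      = ∑ α, ∑ β, (f α - f β) ^ 2 := by
  have hsplit : ∀ α : Fin r, ∑ β, (f α - f β) ^ 2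
      = (∑ β ∈ univ.filter (fun β => α < β), (f α - f β) ^ 2)
        + ∑ β ∈ univ.filter (fun β => β < α), (f α - f β) ^ 2 := by
    intro α
    rw [← sum_filter_add_sum_filter_not univ (fun β => α < β) (fun β => (f α - f β) ^ 2)]
    congr 1
    have : (univ.filter (fun β => ¬ α < β) : Finset (Fin r))
        = insert α (univ.filter (fun β => β < α)) := by
      ext β
      simp [not_lt, le_iff_lt_or_eq, or_comm, eq_comm]
    rw [this, sum_insert (by simp)]
    simp
  have hswap : ∑ α, ∑ β ∈ univ.filter (fun β => β < α), (f α - f β) ^ 2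
      = ∑ α, ∑ β ∈ univ.filter (fun β => α < β), (f α - f β) ^ 2 := by
    rw [sum_comm' (t' := univ) (s' := fun β => univ.filter (fun α => β < α))
      (by intro x y; simp)]
    apply sum_congr rfl
    intro β _
    apply sum_congr rfl
    intro α _
    ring
  symm
  calc ∑ α, ∑ β, (f α - f β) ^ 2
      = (∑ α, ∑ β ∈ univ.filter (fun β => α < β), (f α - f β) ^ 2)
        + ∑ α, ∑ β ∈ univ.filter (fun β => β < α), (f α - f β) ^ 2 := by
        rw [← sum_add_distrib]; exact sum_congr rfl fun α _ => hsplit α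
    _ = 2 * ∑ α, ∑ β ∈ univ.filter (fun β => α < β), (f α - f β) ^ 2 := by
        rw [hswap]; ring

lemma pair_sum_expand (r : ℕ) (f : Fin r → ℤ) :
    ∑ α, ∑ β, (f α - f β) ^ 2
      = 2 * ((r : ℤ) * ∑ α, (f α) ^ 2 - (∑ α, f α) ^ 2) := by
  have h : ∀ α : Fin r, ∑ β, (f α - f β) ^ 2
      = (r : ℤ) * (f α) ^ 2 - 2 * f α * (∑ β, f β) + ∑ β, (f β) ^ 2 := by
    intro α
    have : ∀ β : Fin r, (f α - f β) ^ 2 = (f α) ^ 2 - 2 * f α * f β + (f β) ^ 2 := by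
      intro β; ring
    simp_rw [this]
    rw [sum_add_distrib, sum_sub_distrib, ← mul_sum]
    simp [card_univ, mul_comm]
  simp_rw [h]
  rw [sum_add_distrib, sum_sub_distrib]
  have h1 : ∑ α, (r : ℤ) * (f α) ^ 2 = (r : ℤ) * ∑ α, (f α) ^ 2 := by rw [mul_sum]
  have h2 : ∑ α, 2 * f α * (∑ β, f β) = 2 * (∑ α, f α) ^ 2 := by
    rw [← sum_mul, ← mul_sum]; ring
  have h3 : (∑ _α : Fin r, (∑ β, (f β) ^ 2)) = (r : ℤ) * ∑ β, (f β) ^ 2 := by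
    rw [sum_const, card_univ, Fintype.card_fin, nsmul_eq_mul]
  rw [h1, h2, h3]
  ring

/-- For integers k_1,…,k_r summing to k with 0 ≤ k ≤ r, the quantity
∑_{α<β}(k_α−k_β)² is bounded below by k(r−k), with equality achieved when
exactly k of the k_α equal 1 and the rest equal 0. -/
theorem pair_sum_sq_lower_bound (r : ℕ) (hr : 1 ≤ r) (k : ℕ) (hk : k ≤ r) :
    (∀ kf : Fin r → ℤ, ∑ α, kf α = (k : ℤ) →
      (k : ℤ) * ((r : ℤ) - k) ≤
        ∑ α, ∑ β ∈ univ.filter (fun β => α < β), (kf α - kf β) ^ 2) ∧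
    (∀ kf : Fin r → ℤ, (univ.filter (fun α => kf α = 1)).card = k →
      (∀ α, kf α = 1 ∨ kf α = 0) →
      ∑ α, kf α = (k : ℤ) ∧
      ∑ α, ∑ β ∈ univ.filter (fun β => α < β), (kf α - kf β) ^ 2 =
        (k : ℤ) * ((r : ℤ) - k)) := by
  constructor
  · intro kf hsum
    have h2 := (pair_sum_double r kf).trans (pair_sum_expand r kf)
    have hq : (∑ α, kf α) ≤ ∑ α, (kf α) ^ 2 := by
      apply sum_le_sum
      intro α _
      nlinarith [sq_nonneg (kf α - 1)]
    rw [hsum] at hq h2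
    have hr' : (0 : ℤ) ≤ (r : ℤ) := by positivity
    nlinarith [h2, hq, hr']
  · intro kf hcard hval
    have hsum : ∑ α, kf α = (k : ℤ) := by
      have : ∀ α : Fin r, kf α = if kf α = 1 then 1 else 0 := by
        intro α; rcases hval α with h | h <;> simp [h]
      rw [sum_congr rfl fun α _ => this α]
      simp [sum_boole, hcard]
    refine ⟨hsum, ?_⟩
    have hsq : ∑ α, (kf α) ^ 2 = ∑ α, kf α := by
      apply sum_congr rfl
      intro α _
      rcases hval α with h | h <;> simp [h]
    have h2 := (pair_sum_double r kf).trans (pair_sum_expand r kf)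
    rw [hsq, hsum] at h2
    linarith [h2]
end

section
/- The number of fixed points of the toric action on M^p(r,k,n) equals the number of tuples ((k_1,Y_1^{(1)},Y_1^{(2)}),…,(k_r,Y_r^{(1)},Y_r^{(2)})) of integers and pairs of Young diagrams satisfying ∑_α k_α = k and ∑_α(|Y_α^{(1)}|+|Y_α^{(2)}|) + (p/2r)∑_{α<β}(k_α−k_β)² = n; this number is finite. -/
open Finset

set_option maxHeartbeats 1000000

set_option maxHeartbeats 1000000

lemma yd_cell_lt_card {Y : YoungDiagram} {i j : ℕ} (h : (i, j) ∈ Y) :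
    i < Y.card ∧ j < Y.card := by
  constructor
  · have hsub : (Finset.range (i+1)).image (fun i' => (i', j)) ⊆ Y.cells := by
      intro x hx
      simp only [Finset.mem_image, Finset.mem_range] at hx
      obtain ⟨i', hi', rfl⟩ := hx
      exact Y.up_left_mem (Nat.lt_succ_iff.mp hi') le_rfl h
    have hc := Finset.card_le_card hsub
    rwa [Finset.card_image_of_injective _ (fun a b hab => by simpa using hab),
      Finset.card_range, Nat.succ_le_iff] at hc
  · have hsub : (Finset.range (j+1)).image (fun j' => (i, j')) ⊆ Y.cells := by
      intro x hx
      simp only [Finset.mem_image, Finset.mem_range] at hx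
      obtain ⟨j', hj', rfl⟩ := hx
      exact Y.up_left_mem le_rfl (Nat.lt_succ_iff.mp hj') h
    have hc := Finset.card_le_card hsub
    rwa [Finset.card_image_of_injective _ (fun a b hab => by simpa using hab),
      Finset.card_range, Nat.succ_le_iff] at hc

lemma yd_finite (N : ℕ) : {Y : YoungDiagram | Y.card ≤ N}.Finite := by
  apply Set.Finite.of_finite_image (f := YoungDiagram.cells)
  · apply Set.Finite.subset ((Finset.range N ×ˢ Finset.range N).powerset : Finset _).finite_toSet
    rintro s ⟨Y, hY, rfl⟩
    simp only [Finset.coe_powerset, Set.mem_setOf_eq] at *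
    intro x hx
    rw [Finset.mem_coe] at hx ⊢
    obtain ⟨i, j⟩ := x
    have := yd_cell_lt_card (Y := Y) hx
    simp only [Finset.mem_product, Finset.mem_range]
    exact ⟨lt_of_lt_of_le this.1 hY, lt_of_lt_of_le this.2 hY⟩
  · intro Y1 _ Y2 _ h
    cases Y1; cases Y2; simpa using h

lemma int_abs_le_of_sq_le {d B : ℤ} (hB : 0 ≤ B) (h : d ^ 2 ≤ B) : |d| ≤ B := by
  rcases eq_or_ne d 0 with rfl | hne
  · simpa using hB
  · have h1 : 1 ≤ |d| := Int.one_le_abs hne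
    nlinarith [sq_abs d, abs_nonneg d]


/-- The fixed points of the toric action on M^p(r,k,n) are parametrized by
tuples ((k_α, Y_α^{(1)}, Y_α^{(2)}))_{α=1..r} of integers and pairs of Young
diagrams with ∑ k_α = k and
∑_α(|Y_α^{(1)}|+|Y_α^{(2)}|) + (p/2r)∑_{α<β}(k_α−k_β)² = n.
This set of tuples is finite. -/
theorem fixed_point_set_finite (p r : ℕ) (hp : 1 ≤ p) (hr : 1 ≤ r)
    (k : ℤ) (n : ℚ) :
    {t : (Fin r → ℤ) × (Fin r → YoungDiagram) × (Fin r → YoungDiagram) |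
        (∑ α, t.1 α = k) ∧
        ((∑ α, (((t.2.1 α).card : ℚ) + ((t.2.2 α).card : ℚ))) +
          ((p : ℚ) / (2 * r)) *
            ∑ α, ∑ β ∈ univ.filter (fun β => α < β),
              ((t.1 α - t.1 β : ℤ) : ℚ) ^ 2 = n)}.Finite := by
  set N : ℕ := ⌈n⌉₊ with hN
  set B : ℤ := (⌈(2 * r : ℚ) * n⌉₊ : ℤ) with hB
  have hBnn : (0 : ℤ) ≤ B := Int.ofNat_nonneg _
  set M : ℤ := |k| + r * B with hM
  have hA : {f : Fin r → ℤ | ∀ α, f α ∈ Set.Icc (-M) M}.Finite := by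
    have := Set.Finite.pi (fun _ : Fin r => Set.finite_Icc (-M) M)
    exact this.subset fun f hf i _ => hf i
  have hYD : {g : Fin r → YoungDiagram | ∀ α, (g α).card ≤ N}.Finite := by
    have := Set.Finite.pi (fun _ : Fin r => yd_finite N)
    exact this.subset fun g hg i _ => hg i
  apply Set.Finite.subset (hA.prod (hYD.prod hYD))
  rintro ⟨f, g1, g2⟩ ⟨h1, h2⟩
  simp only [Set.mem_setOf_eq] at h1 h2
  -- basic positivity facts
  have hrQ : (0 : ℚ) < (r : ℚ) := by exact_mod_cast hr
  have hpQ : (1 : ℚ) ≤ (p : ℚ) := by exact_mod_cast hp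
  have hc : (0 : ℚ) < (p : ℚ) / (2 * r) := by positivity
  have hCnn : (0 : ℚ) ≤ ∑ α, (((g1 α).card : ℚ) + ((g2 α).card : ℚ)) :=
    Finset.sum_nonneg fun α _ => by positivity
  have hQnn : (0 : ℚ) ≤ ∑ α, ∑ β ∈ univ.filter (fun β => α < β),
      ((f α - f β : ℤ) : ℚ) ^ 2 :=
    Finset.sum_nonneg fun α _ => Finset.sum_nonneg fun β _ => sq_nonneg _
  have hcQ : (0 : ℚ) ≤ ((p : ℚ) / (2 * r)) * ∑ α, ∑ β ∈ univ.filter (fun β => α < β),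
      ((f α - f β : ℤ) : ℚ) ^ 2 := mul_nonneg hc.le hQnn
  have hnnn : (0 : ℚ) ≤ n := by linarith
  -- square bound for each pair
  have hsq : ∀ α β : Fin r, α < β → ((f α - f β : ℤ) : ℚ) ^ 2 ≤ (2 * r : ℚ) * n := by
    intro α β hab
    have h1' : ((f α - f β : ℤ) : ℚ) ^ 2 ≤
        ∑ β' ∈ univ.filter (fun β' => α < β'), ((f α - f β' : ℤ) : ℚ) ^ 2 :=
      Finset.single_le_sum (f := fun β' => ((f α - f β' : ℤ) : ℚ) ^ 2)
        (fun i _ => sq_nonneg _) (by simp [hab])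
    have h2' : (∑ β' ∈ univ.filter (fun β' => α < β'), ((f α - f β' : ℤ) : ℚ) ^ 2) ≤
        ∑ α', ∑ β' ∈ univ.filter (fun β' => α' < β'), ((f α' - f β' : ℤ) : ℚ) ^ 2 :=
      Finset.single_le_sum
        (f := fun α' => ∑ β' ∈ univ.filter (fun β' => α' < β'), ((f α' - f β' : ℤ) : ℚ) ^ 2)
        (fun i _ => Finset.sum_nonneg fun _ _ => sq_nonneg _) (Finset.mem_univ α)
    have hQle : ((p : ℚ) / (2 * r)) * ∑ α', ∑ β' ∈ univ.filter (fun β' => α' < β'),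
        ((f α' - f β' : ℤ) : ℚ) ^ 2 ≤ n := by linarith
    have hsqQ := le_trans h1' h2'
    have hQle2 : (∑ α', ∑ β' ∈ univ.filter (fun β' => α' < β'),
        ((f α' - f β' : ℤ) : ℚ) ^ 2) ≤ n / ((p : ℚ) / (2 * r)) := by
      rw [le_div_iff₀ hc]; linarith [mul_comm ((p : ℚ) / (2 * r))
        (∑ α', ∑ β' ∈ univ.filter (fun β' => α' < β'), ((f α' - f β' : ℤ) : ℚ) ^ 2)]
    have heq : n / ((p : ℚ) / (2 * r)) = n * (2 * r) / p := by
      rw [div_div_eq_mul_div]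
    have hle3 : n * (2 * r) / (p : ℚ) ≤ n * (2 * r) :=
      div_le_self (by positivity) hpQ
    calc ((f α - f β : ℤ) : ℚ) ^ 2 ≤ n / ((p : ℚ) / (2 * r)) := le_trans hsqQ hQle2
      _ ≤ n * (2 * r) := by rw [heq]; exact hle3
      _ = (2 * r : ℚ) * n := by ring
  -- integer bound on pairwise differences
  have h2rB : (2 * r : ℚ) * n ≤ ((B : ℤ) : ℚ) := by
    rw [hB]; push_cast; exact Nat.le_ceil _
  have habs : ∀ α β : Fin r, |f α - f β| ≤ B := by
    intro α β
    rcases lt_trichotomy α β with h | h | h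
    · have := (hsq α β h).trans h2rB
      exact int_abs_le_of_sq_le hBnn (by exact_mod_cast this)
    · simp [h, hBnn]
    · have := (hsq β α h).trans h2rB
      rw [abs_sub_comm]
      exact int_abs_le_of_sq_le hBnn (by exact_mod_cast this)
  -- bound each f α
  have hfbound : ∀ α, f α ∈ Set.Icc (-M) M := by
    intro α
    have hsum : ∑ β, (f α - f β) = (r : ℤ) * f α - k := by
      rw [Finset.sum_sub_distrib, Finset.sum_const, Finset.card_univ, Fintype.card_fin, h1]
      push_cast
      ring
    have habs1 : |(r : ℤ) * f α - k| ≤ (r : ℤ) * B := by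
      rw [← hsum]
      calc |∑ β, (f α - f β)| ≤ ∑ β, |f α - f β| := Finset.abs_sum_le_sum_abs _ _
        _ ≤ (univ : Finset (Fin r)).card • B :=
          Finset.sum_le_card_nsmul _ _ B (fun β _ => habs α β)
        _ = (r : ℤ) * B := by
          rw [Finset.card_univ, Fintype.card_fin]; push_cast [nsmul_eq_mul]; ring
    have habs2 : (r : ℤ) * |f α| ≤ |k| + (r : ℤ) * B := by
      have h3 : |(r : ℤ) * f α| ≤ |(r : ℤ) * f α - k| + |k| := by
        calc |(r : ℤ) * f α| = |((r : ℤ) * f α - k) + k| := by ring_nf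
          _ ≤ |(r : ℤ) * f α - k| + |k| := abs_add_le _ _
      have h4 : |(r : ℤ) * f α| = (r : ℤ) * |f α| := by
        rw [abs_mul, abs_of_nonneg (by positivity : (0:ℤ) ≤ (r:ℤ))]
      linarith
    have hrZ : (1 : ℤ) ≤ (r : ℤ) := by exact_mod_cast hr
    have h5 : |f α| ≤ M := by
      rw [hM]
      nlinarith [abs_nonneg (f α)]
    exact abs_le.mp h5
  -- bound the Young diagram cards
  have hCle : (∑ α, (((g1 α).card : ℚ) + ((g2 α).card : ℚ))) ≤ n := by linarith
  have hcard : ∀ (gg : Fin r → YoungDiagram), (∀ α, gg α = g1 α ∨ gg α = g2 α) →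
      ∀ α, (gg α).card ≤ N := by
    intro gg hgg α
    have hterm : ((gg α).card : ℚ) ≤ ((g1 α).card : ℚ) + ((g2 α).card : ℚ) := by
      rcases hgg α with h | h <;> rw [h] <;> [linarith [Nat.cast_nonneg (α := ℚ) (g2 α).card]; linarith [Nat.cast_nonneg (α := ℚ) (g1 α).card]]
    have hsingle : (((g1 α).card : ℚ) + ((g2 α).card : ℚ)) ≤
        ∑ α', (((g1 α').card : ℚ) + ((g2 α').card : ℚ)) :=
      Finset.single_le_sum (f := fun α' => (((g1 α').card : ℚ) + ((g2 α').card : ℚ)))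
        (fun i _ => by positivity) (Finset.mem_univ α)
    have hfin : ((gg α).card : ℚ) ≤ (N : ℚ) :=
      le_trans (le_trans hterm (le_trans hsingle hCle)) (by rw [hN]; exact Nat.le_ceil n)
    exact_mod_cast hfin
  exact ⟨hfbound, hcard g1 (fun _ => Or.inl rfl), hcard g2 (fun _ => Or.inr rfl)⟩
end
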